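/- arXiv:0801.1057 — 6 statements merged into one kernel-verified Lean document; each statement's English description precedes it below -/
import Mathlib

section
/- Let d ≥ 1 and let M_d be the C*-algebra of d×d complex matrices. Let t ↦ N_t and t ↦ B_t be continuous families of completely positive linear maps on M_d, and let t ↦ A_t be a continuous family of linear maps on M_d satisfying, for all t ≥ 0, the integral equation A_t = N_t + ∫₀ᵗ ∫₀^{t−u} N_{t−u−s} B_u A_s ds du. Then A_t is completely positive for every t ≥ 0. -/
open scoped ComplexOrder

noncomputable instance (d : ℕ) : NormedAddCommGroup (Matrix (Fin d) (Fin d) ℂ) :=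
  { Matrix.frobeniusNormedAddCommGroup with
    toPseudoMetricSpace :=
      (Matrix.frobeniusNormedAddCommGroup (m := Fin d) (n := Fin d) (α := ℂ)).toPseudoMetricSpace.replaceUniformity rfl }

noncomputable instance (d : ℕ) : NormedSpace ℂ (Matrix (Fin d) (Fin d) ℂ) :=
  Matrix.frobeniusNormedSpace

/-- A linear map `Φ` on the algebra `M_d` of `d × d` complex matrices is completely positive
if for every `n ≥ 1` the map `Φ ⊗ id` on `M_d ⊗ M_n` (realized on matrices indexed by
`Fin d × Fin n`) maps positive semidefinite matrices to positive semidefinite matrices. -/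
def IsCompletelyPositive {d : ℕ}
    (Φ : Matrix (Fin d) (Fin d) ℂ →L[ℂ] Matrix (Fin d) (Fin d) ℂ) : Prop :=
  ∀ n : ℕ, 0 < n → ∀ M : Matrix (Fin d × Fin n) (Fin d × Fin n) ℂ, M.PosSemidef →
    Matrix.PosSemidef (Matrix.of fun p q : Fin d × Fin n =>
      Φ (Matrix.of fun i j => M (i, p.2) (j, q.2)) p.1 q.1)

/-!
Let `φ t` be the distance from `A_t` to the cone `S` of completely positive maps, a closed convex
cone stable under composition. Adding an element of `S` does not increase the distance to `S`,
left multiplication by `a ∈ S` multiplies it by at most `‖a‖`, and by Jensen's inequality for the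
convex, positively homogeneous function `dist(·, S)` the distance of an integral is at most the
integral of the distances. Applied to the integral equation this gives
`φ t ≤ C² T ∫₀ᵗ φ` on `[0, T]`, and Grönwall's inequality forces `φ = 0`.
-/

open Set Metric MeasureTheory
open scoped NNReal

theorem LipschitzWith.infDist_le_mul_of_mapsTo {α β : Type*} [PseudoMetricSpace α]
    [PseudoMetricSpace β] {f : α → β} {K : ℝ≥0} (hf : LipschitzWith K f) {s : Set α}
    {t : Set β} (hs : s.Nonempty) (hst : MapsTo f s t) (x : α) :
    infDist (f x) t ≤ K * infDist x s := by
  have : Nonempty s := hs.to_subtype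
  rw [infDist_eq_iInf (x := x), Real.mul_iInf_of_nonneg K.coe_nonneg]
  exact le_ciInf fun y => (infDist_le_dist_of_mem (hst y.2)).trans (hf.dist_le_mul x y)

theorem Convex.convexOn_infDist {E : Type*} [NormedAddCommGroup E] [NormedSpace ℝ E]
    {s : Set E} (hs : Convex ℝ s) : ConvexOn ℝ univ (infDist · s) := by
  refine ⟨convex_univ, fun x _ y _ a b ha hb hab => ?_⟩
  rcases s.eq_empty_or_nonempty with rfl | hne
  · simp
  refine le_of_forall_pos_le_add fun ε hε => ?_
  obtain ⟨z, hz, hxz⟩ := (infDist_lt_iff hne).1 (lt_add_of_pos_right (infDist x s) hε)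
  obtain ⟨w, hw, hyw⟩ := (infDist_lt_iff hne).1 (lt_add_of_pos_right (infDist y s) hε)
  calc infDist (a • x + b • y) s
      ≤ dist (a • x + b • y) (a • z + b • w) := infDist_le_dist_of_mem (hs hz hw ha hb hab)
    _ ≤ a * dist x z + b * dist y w := by
      refine (dist_add_add_le _ _ _ _).trans_eq ?_
      rw [dist_smul₀, dist_smul₀, Real.norm_of_nonneg ha, Real.norm_of_nonneg hb]
    _ ≤ a * (infDist x s + ε) + b * (infDist y s + ε) := by gcongr
    _ = a • infDist x s + b • infDist y s + ε := by
      rw [smul_eq_mul, smul_eq_mul]; linear_combination ε * hab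

theorem nonpos_of_le_mul_integral {φ : ℝ → ℝ} (hφ : Continuous φ) {K a b : ℝ} (hK : 0 ≤ K)
    (h : ∀ t ∈ Icc a b, φ t ≤ K * ∫ s in a..t, φ s) : ∀ t ∈ Icc a b, φ t ≤ 0 := by
  have hderiv : ∀ t, HasDerivAt (fun t => ∫ s in a..t, φ s) (φ t) t := fun t =>
    intervalIntegral.integral_hasDerivAt_right (hφ.intervalIntegrable _ _)
      hφ.aestronglyMeasurable.stronglyMeasurableAtFilter hφ.continuousAt
  have hprimitive : ∀ t ∈ Icc a b, ∫ s in a..t, φ s ≤ 0 := by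
    simpa [gronwallBound_ε0_δ0] using le_gronwallBound_of_liminf_deriv_right_le (δ := 0) (ε := 0)
      (continuous_iff_continuousAt.2 fun t => (hderiv t).continuousAt).continuousOn
      (fun t _ r hr => (hderiv t).hasDerivWithinAt.liminf_right_slope_le hr)
      intervalIntegral.integral_same.le
      (fun t ht => by simpa using h t (Ico_subset_Icc_self ht))
  exact fun t ht => (h t ht).trans (mul_nonpos_of_nonneg_of_nonpos hK (hprimitive t ht))

namespace ProperCone

section NormedSpace

variable {E : Type*} [NormedAddCommGroup E] [NormedSpace ℝ E] (S : ProperCone ℝ E)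

theorem infDist_add_le {x : E} (hx : x ∈ S) (y : E) : infDist (x + y) S ≤ infDist y S := by
  simpa using (isometry_add_left x).lipschitz.infDist_le_mul_of_mapsTo S.nonempty
    (fun _ hy => S.add_mem hx hy) y

theorem infDist_smul_le {c : ℝ} (hc : 0 ≤ c) (y : E) : infDist (c • y) S ≤ c * infDist y S := by
  simpa [Real.norm_of_nonneg hc] using
    (lipschitzWith_smul c).infDist_le_mul_of_mapsTo S.nonempty (fun _ hy => S.smul_mem hy hc) y

theorem infDist_integral_le [CompleteSpace E] {α : Type*} [MeasurableSpace α] {μ : Measure α}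
    [IsFiniteMeasure μ] {f : α → E} (hf : Integrable f μ) :
    infDist (∫ x, f x ∂μ) S ≤ ∫ x, infDist (f x) S ∂μ := by
  rcases eq_zero_or_neZero μ with rfl | _
  · simpa using (infDist_zero_of_mem (s := (S : Set E)) S.zero_mem).le
  have hg : Integrable (fun x => infDist (f x) S) μ := by
    refine hf.norm.mono ((continuous_infDist_pt _).comp_aestronglyMeasurable hf.1)
      (ae_of_all _ fun x => ?_)
    rw [Real.norm_of_nonneg infDist_nonneg, norm_norm, ← dist_zero_right]
    exact infDist_le_dist_of_mem S.zero_mem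
  have jensen := S.convex.convexOn_infDist.map_average_le
    (continuous_infDist_pt _).continuousOn isClosed_univ (ae_of_all _ fun _ => mem_univ _) hf hg
  rw [← measure_smul_average, ← measure_smul_average]
  exact (S.infDist_smul_le measureReal_nonneg _).trans
    (mul_le_mul_of_nonneg_left jensen measureReal_nonneg)

theorem infDist_intervalIntegral_le [CompleteSpace E] {f : ℝ → E} {a b : ℝ} (hab : a ≤ b)
    (hf : IntervalIntegrable f volume a b) :
    infDist (∫ x in a..b, f x) S ≤ ∫ x in a..b, infDist (f x) S := by
  rw [intervalIntegral.integral_of_le hab, intervalIntegral.integral_of_le hab]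
  have : IsFiniteMeasure (volume.restrict (Ioc a b)) :=
    isFiniteMeasure_restrict.2 measure_Ioc_lt_top.ne
  exact S.infDist_integral_le hf.1

end NormedSpace

section NormedRing

variable {X : Type*} [NormedRing X] [NormedSpace ℝ X] (S : ProperCone ℝ X)

theorem infDist_mul_le {a : X} (ha : a ∈ S) (hmul : ∀ x ∈ S, ∀ y ∈ S, x * y ∈ S) (y : X) :
    infDist (a * y) S ≤ ‖a‖ * infDist y S := by
  have hlip : LipschitzWith ‖a‖₊ (a * ·) := LipschitzWith.of_dist_le_mul fun x y => by
    simpa only [dist_eq_norm, ← mul_sub, coe_nnnorm] using norm_mul_le a (x - y)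
  exact hlip.infDist_le_mul_of_mapsTo S.nonempty (fun _ hy => hmul _ ha _ hy) y

variable [CompleteSpace X] {S}

theorem infDist_integral_mul_mul_le (hmul : ∀ x ∈ S, ∀ y ∈ S, x * y ∈ S) {N B A : ℝ → X}
    (hN : Continuous N) (hA : Continuous A)
    (hNS : ∀ t, 0 ≤ t → N t ∈ S) (hBS : ∀ t, 0 ≤ t → B t ∈ S) {C T : ℝ}
    (hNC : ∀ t ∈ Icc 0 T, ‖N t‖ ≤ C) (hBC : ∀ t ∈ Icc 0 T, ‖B t‖ ≤ C) {t u : ℝ}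
    (ht : t ≤ T) (hu : u ∈ Icc 0 t) :
    infDist (∫ s in 0..t - u, N (t - u - s) * (B u * A s)) S ≤
      C * C * ∫ s in 0..t, infDist (A s) S := by
  have hC : 0 ≤ C := (norm_nonneg _).trans (hBC u ⟨hu.1, hu.2.trans ht⟩)
  have hφ : Continuous fun s => infDist (A s) S := (continuous_infDist_pt _).comp hA
  have htu : 0 ≤ t - u := sub_nonneg.2 hu.2
  have hF : Continuous fun s => N (t - u - s) * (B u * A s) := by fun_prop
  calc infDist (∫ s in 0..t - u, N (t - u - s) * (B u * A s)) S
      ≤ ∫ s in 0..t - u, infDist (N (t - u - s) * (B u * A s)) S :=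
        S.infDist_intervalIntegral_le htu (hF.intervalIntegrable _ _)
    _ ≤ ∫ s in 0..t - u, C * C * infDist (A s) S := by
      refine intervalIntegral.integral_mono_on htu
        (((continuous_infDist_pt _).comp hF).intervalIntegrable _ _)
        ((hφ.const_mul _).intervalIntegrable _ _) fun s hs => ?_
      have hNs : N (t - u - s) ∈ S := hNS _ (by linarith [hs.2])
      calc infDist (N (t - u - s) * (B u * A s)) S
          ≤ ‖N (t - u - s)‖ * (‖B u‖ * infDist (A s) S) :=
            (S.infDist_mul_le hNs hmul _).trans (mul_le_mul_of_nonneg_left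
              (S.infDist_mul_le (hBS u hu.1) hmul _) (norm_nonneg _))
        _ ≤ C * (C * infDist (A s) S) :=
          mul_le_mul (hNC _ ⟨by linarith [hs.2], by linarith [hs.1, hu.1]⟩)
            (mul_le_mul_of_nonneg_right (hBC _ ⟨hu.1, hu.2.trans ht⟩) infDist_nonneg)
            (mul_nonneg (norm_nonneg _) infDist_nonneg) hC
        _ = C * C * infDist (A s) S := by ring
    _ ≤ ∫ s in 0..t, C * C * infDist (A s) S :=
      intervalIntegral.integral_mono_interval le_rfl htu (by linarith [hu.1])
        (ae_of_all _ fun s => mul_nonneg (mul_nonneg hC hC) infDist_nonneg)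
        ((hφ.const_mul _).intervalIntegrable _ _)
    _ = C * C * ∫ s in 0..t, infDist (A s) S := intervalIntegral.integral_const_mul _ _

theorem infDist_le_mul_integral_of_integral_equation (hmul : ∀ x ∈ S, ∀ y ∈ S, x * y ∈ S)
    {N B A : ℝ → X} (hN : Continuous N) (hB : Continuous B) (hA : Continuous A)
    (hNS : ∀ t, 0 ≤ t → N t ∈ S) (hBS : ∀ t, 0 ≤ t → B t ∈ S)
    (hAeq : ∀ t, 0 ≤ t → A t = N t +
      ∫ u in (0 : ℝ)..t, ∫ s in (0 : ℝ)..(t - u), N (t - u - s) * (B u * A s))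
    {C T : ℝ} (hNC : ∀ t ∈ Icc 0 T, ‖N t‖ ≤ C) (hBC : ∀ t ∈ Icc 0 T, ‖B t‖ ≤ C)
    {t : ℝ} (ht : t ∈ Icc 0 T) :
    infDist (A t) S ≤ C * C * T * ∫ s in 0..t, infDist (A s) S := by
  set I := ∫ s in 0..t, infDist (A s) S
  have hI : 0 ≤ I := intervalIntegral.integral_nonneg ht.1 fun _ _ => infDist_nonneg
  have hinner : Continuous fun u => ∫ s in 0..t - u, N (t - u - s) * (B u * A s) :=
    intervalIntegral.continuous_parametric_intervalIntegral_of_continuous (by fun_prop)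
      (by fun_prop)
  calc infDist (A t) S
      ≤ infDist (∫ u in 0..t, ∫ s in 0..t - u, N (t - u - s) * (B u * A s)) S := by
        rw [hAeq t ht.1]
        exact S.infDist_add_le (hNS t ht.1) _
    _ ≤ ∫ u in 0..t, infDist (∫ s in 0..t - u, N (t - u - s) * (B u * A s)) S :=
        S.infDist_intervalIntegral_le ht.1 (hinner.intervalIntegrable _ _)
    _ ≤ ∫ _ in 0..t, C * C * I :=
        intervalIntegral.integral_mono_on ht.1
          (((continuous_infDist_pt _).comp hinner).intervalIntegrable _ _)
          intervalIntegrable_const fun u hu =>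
            infDist_integral_mul_mul_le hmul hN hA hNS hBS hNC hBC ht.2 hu
    _ = t * (C * C * I) := by rw [intervalIntegral.integral_const, smul_eq_mul, sub_zero]
    _ ≤ T * (C * C * I) := mul_le_mul_of_nonneg_right ht.2 (mul_nonneg (mul_self_nonneg C) hI)
    _ = C * C * T * I := by ring

theorem mem_of_integral_equation_of_continuous (hmul : ∀ x ∈ S, ∀ y ∈ S, x * y ∈ S)
    {N B A : ℝ → X} (hN : Continuous N) (hB : Continuous B) (hA : Continuous A)
    (hNS : ∀ t, 0 ≤ t → N t ∈ S) (hBS : ∀ t, 0 ≤ t → B t ∈ S)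
    (hAeq : ∀ t, 0 ≤ t → A t = N t +
      ∫ u in (0 : ℝ)..t, ∫ s in (0 : ℝ)..(t - u), N (t - u - s) * (B u * A s))
    {T : ℝ} (hT : 0 ≤ T) : A T ∈ S := by
  obtain ⟨C₁, hC₁⟩ := (isCompact_Icc (a := 0) (b := T)).exists_bound_of_continuousOn
    hN.continuousOn
  obtain ⟨C₂, hC₂⟩ := (isCompact_Icc (a := 0) (b := T)).exists_bound_of_continuousOn
    hB.continuousOn
  have hdist := nonpos_of_le_mul_integral ((continuous_infDist_pt _).comp hA)
    (mul_nonneg (mul_self_nonneg (max C₁ C₂)) hT)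
    (fun t ht => infDist_le_mul_integral_of_integral_equation hmul hN hB hA hNS hBS hAeq
      (fun s hs => (hC₁ s hs).trans (le_max_left _ _))
      (fun s hs => (hC₂ s hs).trans (le_max_right _ _)) ht)
    T ⟨hT, le_rfl⟩
  exact (S.isClosed.mem_iff_infDist_zero S.nonempty).2 (hdist.antisymm infDist_nonneg)

theorem mem_of_integral_equation (hmul : ∀ x ∈ S, ∀ y ∈ S, x * y ∈ S) {N B A : ℝ → X}
    (hN : ContinuousOn N (Ici 0)) (hB : ContinuousOn B (Ici 0)) (hA : ContinuousOn A (Ici 0))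
    (hNS : ∀ t, 0 ≤ t → N t ∈ S) (hBS : ∀ t, 0 ≤ t → B t ∈ S)
    (hAeq : ∀ t, 0 ≤ t → A t = N t +
      ∫ u in (0 : ℝ)..t, ∫ s in (0 : ℝ)..(t - u), N (t - u - s) * (B u * A s)) :
    ∀ t, 0 ≤ t → A t ∈ S := by
  intro T hT
  -- Only values at nonnegative times enter the equation, so we may freeze the data for `t < 0`.
  have hext {F : ℝ → X} (hF : ContinuousOn F (Ici 0)) : Continuous fun t => F (max t 0) :=
    hF.comp_continuous (by fun_prop) fun t => le_max_right t 0
  have hAeq' (t : ℝ) (ht : 0 ≤ t) : A (max t 0) = N (max t 0) + ∫ u in (0 : ℝ)..t,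
      ∫ s in (0 : ℝ)..(t - u), N (max (t - u - s) 0) * (B (max u 0) * A (max s 0)) := by
    rw [max_eq_left ht, hAeq t ht]
    congr 1
    refine intervalIntegral.integral_congr fun u hu =>
      intervalIntegral.integral_congr fun s hs => ?_
    rw [uIcc_of_le ht] at hu
    rw [uIcc_of_le (sub_nonneg.2 hu.2)] at hs
    simp only [max_eq_left hu.1, max_eq_left hs.1, max_eq_left (sub_nonneg.2 hs.2)]
  simpa [max_eq_left hT] using mem_of_integral_equation_of_continuous hmul (hext hN) (hext hB)
    (hext hA) (fun t _ => hNS _ (le_max_right t 0)) (fun t _ => hBS _ (le_max_right t 0)) hAeq' hT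

end NormedRing

end ProperCone

theorem Matrix.isClosed_setOf_posSemidef {n 𝕜 : Type*} [RCLike 𝕜] :
    IsClosed {M : Matrix n n 𝕜 | M.PosSemidef} := by
  have hset : {M : Matrix n n 𝕜 | M.PosSemidef} = {M | M.conjTranspose = M} ∩
      ⋂ x : n →₀ 𝕜, {M | 0 ≤ x.sum fun i xi => x.sum fun j xj => star xi * M i j * xj} := by
    ext M
    simp [Matrix.PosSemidef, Matrix.IsHermitian]
  rw [hset]
  refine (isClosed_eq continuous_id.matrix_conjTranspose continuous_id).inter
    (isClosed_iInter fun x => isClosed_le continuous_const ?_)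
  simp only [Finsupp.sum]
  fun_prop

/-- `(Φ ⊗ id_n) M`, in the block indexing used by `IsCompletelyPositive`. -/
noncomputable def ampliation {d : ℕ} (n : ℕ)
    (Φ : Matrix (Fin d) (Fin d) ℂ →L[ℂ] Matrix (Fin d) (Fin d) ℂ)
    (M : Matrix (Fin d × Fin n) (Fin d × Fin n) ℂ) : Matrix (Fin d × Fin n) (Fin d × Fin n) ℂ :=
  Matrix.of fun p q => Φ (Matrix.of fun i j => M (i, p.2) (j, q.2)) p.1 q.1

theorem continuous_ampliation {d n : ℕ} (M : Matrix (Fin d × Fin n) (Fin d × Fin n) ℂ) :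
    Continuous fun Φ : Matrix (Fin d) (Fin d) ℂ →L[ℂ] Matrix (Fin d) (Fin d) ℂ =>
      ampliation n Φ M := by
  refine continuous_pi fun p => continuous_pi fun q => ?_
  exact (continuous_apply q.1).comp ((continuous_apply p.1).comp
    (ContinuousLinearMap.apply ℂ _ (Matrix.of fun i j => M (i, p.2) (j, q.2))).continuous)

theorem IsCompletelyPositive.comp {d : ℕ}
    {Φ Ψ : Matrix (Fin d) (Fin d) ℂ →L[ℂ] Matrix (Fin d) (Fin d) ℂ}
    (hΦ : IsCompletelyPositive Φ) (hΨ : IsCompletelyPositive Ψ) :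
    IsCompletelyPositive (Φ.comp Ψ) :=
  fun n hn M hM => hΦ n hn _ (hΨ n hn M hM)

noncomputable def completelyPositiveCone (d : ℕ) :
    ProperCone ℝ (Matrix (Fin d) (Fin d) ℂ →L[ℂ] Matrix (Fin d) (Fin d) ℂ) where
  carrier := {Φ | IsCompletelyPositive Φ}
  zero_mem' _ _ _ _ := Matrix.PosSemidef.zero
  add_mem' hΦ hΨ n hn M hM := (hΦ n hn M hM).add (hΨ n hn M hM)
  smul_mem' c _ hΦ n hn M hM := (hΦ n hn M hM).smul c.2
  isClosed' := by
    simp only [IsCompletelyPositive, ofPred_forall]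
    exact isClosed_iInter fun n => isClosed_iInter fun _ => isClosed_iInter fun M =>
      isClosed_iInter fun _ => Matrix.isClosed_setOf_posSemidef.preimage (continuous_ampliation M)

theorem integral_equation_completely_positive_general
    {d : ℕ}
    (N B : ℝ → (Matrix (Fin d) (Fin d) ℂ →L[ℂ] Matrix (Fin d) (Fin d) ℂ))
    (hNcont : ContinuousOn N (Set.Ici 0))
    (hNcp : ∀ t, 0 ≤ t → IsCompletelyPositive (N t))
    (hBcont : ContinuousOn B (Set.Ici 0))
    (hBcp : ∀ t, 0 ≤ t → IsCompletelyPositive (B t))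
    (A : ℝ → (Matrix (Fin d) (Fin d) ℂ →L[ℂ] Matrix (Fin d) (Fin d) ℂ))
    (hAcont : ContinuousOn A (Set.Ici 0))
    (hAeq : ∀ t, 0 ≤ t → A t = N t +
      ∫ u in (0 : ℝ)..t, ∫ s in (0 : ℝ)..(t - u), (N (t - u - s)).comp ((B u).comp (A s))) :
    ∀ t, 0 ≤ t → IsCompletelyPositive (A t) :=
  (completelyPositiveCone d).mem_of_integral_equation (fun _ hΦ _ hΨ => hΦ.comp hΨ)
    hNcont hBcont hAcont hNcp hBcp hAeq

/-- A continuous family `A_t` satisfying the integral equation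
`A_t = N_t + ∫₀ᵗ ∫₀^{t−u} N_{t−u−s} B_u A_s ds du` with `N_t`, `B_t` completely positive
is completely positive for every `t ≥ 0`. -/
theorem integral_equation_completely_positive
    {d : ℕ} (hd : 1 ≤ d)
    (N B : ℝ → (Matrix (Fin d) (Fin d) ℂ →L[ℂ] Matrix (Fin d) (Fin d) ℂ))
    (hNcont : ContinuousOn N (Set.Ici 0))
    (hNcp : ∀ t, 0 ≤ t → IsCompletelyPositive (N t))
    (hBcont : ContinuousOn B (Set.Ici 0))
    (hBcp : ∀ t, 0 ≤ t → IsCompletelyPositive (B t))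
    (A : ℝ → (Matrix (Fin d) (Fin d) ℂ →L[ℂ] Matrix (Fin d) (Fin d) ℂ))
    (hAcont : ContinuousOn A (Set.Ici 0))
    (hAeq : ∀ t, 0 ≤ t → A t = N t +
      ∫ u in (0 : ℝ)..t, ∫ s in (0 : ℝ)..(t - u), (N (t - u - s)).comp ((B u).comp (A s))) :
    ∀ t, 0 ≤ t → IsCompletelyPositive (A t) :=
  integral_equation_completely_positive_general N B hNcont hNcp hBcont hBcp A hAcont hAeq
end

section
/- Let κ > 0 and 0 ≤ γ < 1, and define f : [0,∞) → ℝ by f(t) = e^{−κγt}[ cos(κt√(1−γ²)) + (γ/√(1−γ²)) sin(κt√(1−γ²)) ]. Then f(0) = 1 and f satisfies the integro-differential equation f′(t) = − ∫₀ᵗ κ² e^{−2κγ(t−s)} f(s) ds for all t ≥ 0. -/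
/-!
Write `σ = √(1 - γ²)`, `C(t) = e^{-κγt} (cos κσt + (γ/σ) sin κσt)` (the function `f`) and
`S(t) = e^{-κγt} sin κσt`. Since `γ² + σ² = 1`, the pair solves the linear system
`C' = -(κ/σ) S` and `S' = κσ C - 2κγ S`. The second equation says that `u = (κ/σ) S` solves
`u' + 2κγ u = κ² C` with `u(0) = 0`, so by variation of constants the memory integral
`∫₀ᵗ κ² e^{-2κγ(t-s)} C(s) ds` equals `u(t) = -C'(t)`.
-/

open Real

/-- Variation of constants for `u' + c u = h`. -/
theorem integral_exp_mul_eq_of_hasDerivAt {u h : ℝ → ℝ} {c : ℝ}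
    (hu : ∀ s, HasDerivAt u (h s - c * u s) s) (hh : Continuous h) (a b : ℝ) :
    ∫ s in a..b, exp (-(c * (b - s))) * h s = u b - exp (-(c * (b - a))) * u a := by
  have hF : ∀ s, HasDerivAt (fun s => exp (c * s) * u s) (exp (c * s) * h s) s := fun s =>
    ((((hasDerivAt_id' s).const_mul c).exp).mul (hu s)).congr_deriv (by ring)
  calc ∫ s in a..b, exp (-(c * (b - s))) * h s
      = exp (-(c * b)) * ∫ s in a..b, exp (c * s) * h s := by
        rw [← intervalIntegral.integral_const_mul]
        refine intervalIntegral.integral_congr fun s _ => ?_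
        rw [← mul_assoc, ← exp_add]
        ring_nf
    _ = exp (-(c * b)) * (exp (c * b) * u b - exp (c * a) * u a) := by
        rw [intervalIntegral.integral_eq_sub_of_hasDerivAt (fun s _ => hF s)
          (Continuous.intervalIntegrable (by fun_prop) a b)]
    _ = u b - exp (-(c * (b - a))) * u a := by
        rw [mul_sub, ← mul_assoc, ← mul_assoc, ← exp_add, ← exp_add, neg_add_cancel, exp_zero,
          one_mul]
        ring_nf

namespace LidarShabani

variable (κ γ σ : ℝ)

noncomputable def dampedCos (t : ℝ) : ℝ :=
  exp (-(κ * γ * t)) * (cos (κ * t * σ) + (γ / σ) * sin (κ * t * σ))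

noncomputable def dampedSin (t : ℝ) : ℝ :=
  exp (-(κ * γ * t)) * sin (κ * t * σ)

variable {κ γ σ}

@[simp]
theorem dampedSin_zero : dampedSin κ γ σ 0 = 0 := by
  simp [dampedSin]

theorem continuous_dampedCos : Continuous (dampedCos κ γ σ) := by
  unfold dampedCos
  fun_prop

private theorem hasDerivAt_exp_neg_mul (a t : ℝ) :
    HasDerivAt (fun t => exp (-(a * t))) (-a * exp (-(a * t))) t :=
  (((hasDerivAt_id' t).const_mul a).fun_neg.exp).congr_deriv (by ring)

private theorem hasDerivAt_mul_mul (a b t : ℝ) : HasDerivAt (fun t => a * t * b) (a * b) t :=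
  (((hasDerivAt_id' t).const_mul a).mul_const b).congr_deriv (by ring)

theorem hasDerivAt_dampedCos (hσ : σ ≠ 0) (hγσ : γ ^ 2 + σ ^ 2 = 1) (t : ℝ) :
    HasDerivAt (dampedCos κ γ σ) (-(κ / σ) * dampedSin κ γ σ t) t := by
  have harg := hasDerivAt_mul_mul κ σ t
  refine ((hasDerivAt_exp_neg_mul (κ * γ) t).mul
    (harg.cos.fun_add (harg.sin.const_mul (γ / σ)))).congr_deriv ?_
  simp only [dampedSin]
  field_simp
  linear_combination (-(κ * sin (κ * t * σ))) * hγσ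

theorem hasDerivAt_dampedSin (hσ : σ ≠ 0) (t : ℝ) :
    HasDerivAt (dampedSin κ γ σ)
      (κ * σ * dampedCos κ γ σ t - 2 * κ * γ * dampedSin κ γ σ t) t := by
  refine ((hasDerivAt_exp_neg_mul (κ * γ) t).mul (hasDerivAt_mul_mul κ σ t).sin).congr_deriv ?_
  simp only [dampedCos, dampedSin]
  field_simp
  ring

theorem integral_memoryKernel_mul_dampedCos (hσ : σ ≠ 0) (t : ℝ) :
    ∫ s in (0 : ℝ)..t, κ ^ 2 * exp (-(2 * κ * γ * (t - s))) * dampedCos κ γ σ s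
      = (κ / σ) * dampedSin κ γ σ t := by
  have hu : ∀ s, HasDerivAt (fun s => (κ / σ) * dampedSin κ γ σ s)
      (κ ^ 2 * dampedCos κ γ σ s - 2 * κ * γ * ((κ / σ) * dampedSin κ γ σ s)) s := fun s =>
    ((hasDerivAt_dampedSin hσ s).const_mul (κ / σ)).congr_deriv (by field_simp)
  calc ∫ s in (0 : ℝ)..t, κ ^ 2 * exp (-(2 * κ * γ * (t - s))) * dampedCos κ γ σ s
      = ∫ s in (0 : ℝ)..t, exp (-(2 * κ * γ * (t - s))) * (κ ^ 2 * dampedCos κ γ σ s) :=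
        intervalIntegral.integral_congr fun s _ => by ring
    _ = (κ / σ) * dampedSin κ γ σ t := by
        rw [integral_exp_mul_eq_of_hasDerivAt hu (continuous_const.mul continuous_dampedCos),
          dampedSin_zero, mul_zero, mul_zero, sub_zero]

end LidarShabani

theorem lidarShabani_solution_underdamped_general
    (κ γ : ℝ) (hγ0 : 0 ≤ γ) (hγ1 : γ < 1)
    (f : ℝ → ℝ)
    (hf : ∀ t, f t = Real.exp (-(κ * γ * t)) *
      (Real.cos (κ * t * Real.sqrt (1 - γ ^ 2)) +
        (γ / Real.sqrt (1 - γ ^ 2)) * Real.sin (κ * t * Real.sqrt (1 - γ ^ 2)))) :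
    f 0 = 1 ∧ ∀ t, 0 ≤ t →
      HasDerivAt f (-∫ s in (0 : ℝ)..t, κ ^ 2 * Real.exp (-(2 * κ * γ * (t - s))) * f s) t := by
  set σ := √(1 - γ ^ 2)
  have hγσ : γ ^ 2 + σ ^ 2 = 1 := by rw [sq_sqrt (by nlinarith)]; ring
  have hσ : σ ≠ 0 := (sqrt_pos.mpr (by nlinarith)).ne'
  obtain rfl : f = LidarShabani.dampedCos κ γ σ := funext hf
  refine ⟨by simp [LidarShabani.dampedCos], fun t _ => ?_⟩
  rw [LidarShabani.integral_memoryKernel_mul_dampedCos hσ, ← neg_mul]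
  exact LidarShabani.hasDerivAt_dampedCos hσ hγσ t

/-- For `κ > 0`, `0 ≤ γ < 1`, the function
`f(t) = e^{−κγt}[cos(κt√(1−γ²)) + (γ/√(1−γ²)) sin(κt√(1−γ²))]` satisfies `f(0) = 1` and
`f′(t) = −∫₀ᵗ κ² e^{−2κγ(t−s)} f(s) ds` for all `t ≥ 0`. -/
theorem lidarShabani_solution_underdamped
    (κ γ : ℝ) (hκ : 0 < κ) (hγ0 : 0 ≤ γ) (hγ1 : γ < 1)
    (f : ℝ → ℝ)
    (hf : ∀ t, f t = Real.exp (-(κ * γ * t)) *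
      (Real.cos (κ * t * Real.sqrt (1 - γ ^ 2)) +
        (γ / Real.sqrt (1 - γ ^ 2)) * Real.sin (κ * t * Real.sqrt (1 - γ ^ 2)))) :
    f 0 = 1 ∧ ∀ t, 0 ≤ t →
      HasDerivAt f (-∫ s in (0 : ℝ)..t, κ ^ 2 * Real.exp (-(2 * κ * γ * (t - s))) * f s) t :=
  lidarShabani_solution_underdamped_general κ γ hγ0 hγ1 f hf
end

section
/- Let κ > 0 and define f : [0,∞) → ℝ by f(t) = e^{−κt}(1 + κt). Then f(0) = 1 and f satisfies the integro-differential equation f′(t) = − ∫₀ᵗ κ² e^{−2κ(t−s)} f(s) ds for all t ≥ 0. -/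
/-! The kernel turns the integrand into `κ² e^{-2κt} (1 + κs) e^{κs}`, an exact derivative of
`κ² e^{-2κt} s e^{κs}`, so the memory integral is `κ² t e^{-κt}`; differentiating
`e^{-κt}(1 + κt)` gives exactly its negative. -/

open Real

theorem hasDerivAt_mul_exp_const_mul (κ s : ℝ) :
    HasDerivAt (fun s => s * exp (κ * s)) ((1 + κ * s) * exp (κ * s)) s :=
  ((hasDerivAt_id' s).mul ((hasDerivAt_id' s).const_mul κ).exp).congr_deriv (by ring)

theorem hasDerivAt_exp_neg_mul_mul_one_add (κ t : ℝ) :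
    HasDerivAt (fun t => exp (-(κ * t)) * (1 + κ * t)) (-(κ ^ 2 * t * exp (-(κ * t)))) t :=
  (((hasDerivAt_id' t).const_mul κ).fun_neg.exp.mul
    (((hasDerivAt_id' t).const_mul κ).const_add 1)).congr_deriv (by ring)

theorem integral_kernel_mul_exp_neg_mul_mul_one_add (κ t : ℝ) :
    ∫ s in (0 : ℝ)..t, κ ^ 2 * exp (-(2 * κ * (t - s))) * (exp (-(κ * s)) * (1 + κ * s)) =
      κ ^ 2 * t * exp (-(κ * t)) := by
  have integrand_eq : ∀ s, κ ^ 2 * exp (-(2 * κ * (t - s))) * (exp (-(κ * s)) * (1 + κ * s)) =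
      κ ^ 2 * exp (-(2 * κ * t)) * ((1 + κ * s) * exp (κ * s)) := by
    intro s
    have exp_shift : exp (-(2 * κ * (t - s))) * exp (-(κ * s)) = exp (-(2 * κ * t)) * exp (κ * s) := by
      rw [← exp_add, ← exp_add]
      ring_nf
    linear_combination κ ^ 2 * (1 + κ * s) * exp_shift
  have exp_at_t : exp (-(2 * κ * t)) * exp (κ * t) = exp (-(κ * t)) := by
    rw [← exp_add]
    ring_nf
  simp_rw [integrand_eq]
  rw [intervalIntegral.integral_const_mul,
    intervalIntegral.integral_eq_sub_of_hasDerivAt (fun s _ => hasDerivAt_mul_exp_const_mul κ s)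
      (by apply Continuous.intervalIntegrable; fun_prop)]
  linear_combination κ ^ 2 * t * exp_at_t

theorem lidarShabani_solution_critical_general
    (κ : ℝ) (f : ℝ → ℝ)
    (hf : ∀ t, f t = Real.exp (-(κ * t)) * (1 + κ * t)) :
    f 0 = 1 ∧ ∀ t, 0 ≤ t →
      HasDerivAt f (-∫ s in (0 : ℝ)..t, κ ^ 2 * Real.exp (-(2 * κ * (t - s))) * f s) t := by
  obtain rfl : f = fun t => exp (-(κ * t)) * (1 + κ * t) := funext hf
  refine ⟨by simp, fun t _ => ?_⟩
  rw [integral_kernel_mul_exp_neg_mul_mul_one_add]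
  exact hasDerivAt_exp_neg_mul_mul_one_add κ t

/-- For `κ > 0`, the function `f(t) = e^{−κt}(1 + κt)` satisfies `f(0) = 1` and
`f′(t) = −∫₀ᵗ κ² e^{−2κ(t−s)} f(s) ds` for all `t ≥ 0` (the Lidar–Shabani case `γ = 1`). -/
theorem lidarShabani_solution_critical
    (κ : ℝ) (hκ : 0 < κ) (f : ℝ → ℝ)
    (hf : ∀ t, f t = Real.exp (-(κ * t)) * (1 + κ * t)) :
    f 0 = 1 ∧ ∀ t, 0 ≤ t →
      HasDerivAt f (-∫ s in (0 : ℝ)..t, κ ^ 2 * Real.exp (-(2 * κ * (t - s))) * f s) t :=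
  lidarShabani_solution_critical_general κ f hf
end

section
/- Let κ > 0 and γ > 1, and define f : [0,∞) → ℝ by f(t) = e^{−κγt}[ cosh(κt√(γ²−1)) + (γ/√(γ²−1)) sinh(κt√(γ²−1)) ]. Then f(0) = 1 and f satisfies the integro-differential equation f′(t) = − ∫₀ᵗ κ² e^{−2κγ(t−s)} f(s) ds for all t ≥ 0. -/
/-!
Since `(e^{cs} f'(s))' = e^{cs} (f'' + c f')(s)`, a function with `f'(0) = 0` solving the damped
oscillator equation `f'' + c f' + b f = 0` satisfies `f'(t) = -∫₀ᵗ b e^{-c(t-s)} f(s) ds`.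
With `c = 2κγ` and `b = κ²` the characteristic roots are `-κγ ± κ√(γ²-1)`, and the given `f` is
the solution with `f(0) = 1` and `f'(0) = 0`.
-/

open Real intervalIntegral

theorem eq_neg_integral_exp_kernel_of_hasDerivAt {f f' : ℝ → ℝ} {b c : ℝ}
    (hf : ∀ t, HasDerivAt f (f' t) t) (hf' : ∀ t, HasDerivAt f' (-(c * f' t + b * f t)) t)
    (h0 : f' 0 = 0) (t : ℝ) :
    f' t = -∫ s in (0 : ℝ)..t, b * exp (-(c * (t - s))) * f s := by
  have hprim : ∀ s, HasDerivAt (fun s => exp (c * s) * f' s) (-(b * exp (c * s) * f s)) s := by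
    intro s
    refine (((hasDerivAt_id s).const_mul c).exp.mul (hf' s)).congr_deriv ?_
    simp only [id]
    ring
  have hcont : Continuous f := continuous_iff_continuousAt.2 fun s => (hf s).continuousAt
  have hint : ∫ s in (0 : ℝ)..t, b * exp (c * s) * f s = -(exp (c * t) * f' t) := by
    have h := integral_eq_sub_of_hasDerivAt (fun s _ => hprim s)
      ((by fun_prop : Continuous fun s => -(b * exp (c * s) * f s)).intervalIntegrable 0 t)
    rw [integral_neg, h0, mul_zero, sub_zero] at h
    linarith
  have hkernel : ∀ s, b * exp (-(c * (t - s))) * f s = exp (-(c * t)) * (b * exp (c * s) * f s) := by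
    intro s
    rw [show -(c * (t - s)) = -(c * t) + c * s by ring, exp_add]
    ring
  simp_rw [hkernel, integral_const_mul, hint]
  rw [mul_neg, neg_neg, ← mul_assoc, ← exp_add, neg_add_cancel, exp_zero, one_mul]

noncomputable def dampedCosh (α ω t : ℝ) : ℝ :=
  exp (-(α * t)) * (cosh (ω * t) + α / ω * sinh (ω * t))

section
variable (α ω : ℝ)

theorem dampedCosh_zero : dampedCosh α ω 0 = 1 := by simp [dampedCosh]

theorem hasDerivAt_exp_mul_cosh (t : ℝ) :
    HasDerivAt (fun t => exp (-(α * t)) * cosh (ω * t))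
      (exp (-(α * t)) * (ω * sinh (ω * t) - α * cosh (ω * t))) t := by
  refine (((hasDerivAt_id t).const_mul α).neg.exp.mul
    ((hasDerivAt_id t).const_mul ω).cosh).congr_deriv ?_
  simp only [id, Pi.neg_apply]
  ring

theorem hasDerivAt_exp_mul_sinh (t : ℝ) :
    HasDerivAt (fun t => exp (-(α * t)) * sinh (ω * t))
      (exp (-(α * t)) * (ω * cosh (ω * t) - α * sinh (ω * t))) t := by
  refine (((hasDerivAt_id t).const_mul α).neg.exp.mul
    ((hasDerivAt_id t).const_mul ω).sinh).congr_deriv ?_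
  simp only [id, Pi.neg_apply]
  ring

variable {α ω}

theorem hasDerivAt_dampedCosh (hω : ω ≠ 0) (t : ℝ) :
    HasDerivAt (dampedCosh α ω) (-((α ^ 2 - ω ^ 2) / ω) * (exp (-(α * t)) * sinh (ω * t))) t := by
  have hfun : dampedCosh α ω =
      fun t => exp (-(α * t)) * cosh (ω * t) + α / ω * (exp (-(α * t)) * sinh (ω * t)) := by
    funext s
    simp only [dampedCosh]
    ring
  rw [hfun]
  refine ((hasDerivAt_exp_mul_cosh α ω t).add
    ((hasDerivAt_exp_mul_sinh α ω t).const_mul (α / ω))).congr_deriv ?_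
  field_simp
  ring

theorem hasDerivAt_dampedCosh_neg_integral (hω : ω ≠ 0) (t : ℝ) :
    HasDerivAt (dampedCosh α ω)
      (-∫ s in (0 : ℝ)..t, (α ^ 2 - ω ^ 2) * exp (-(2 * α * (t - s))) * dampedCosh α ω s) t := by
  rw [← eq_neg_integral_exp_kernel_of_hasDerivAt (hasDerivAt_dampedCosh hω) _ (by simp) t]
  · exact hasDerivAt_dampedCosh hω t
  · intro s
    refine ((hasDerivAt_exp_mul_sinh α ω s).const_mul (-((α ^ 2 - ω ^ 2) / ω))).congr_deriv ?_
    simp only [dampedCosh]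
    field_simp
    ring

end

/-- For `κ > 0`, `γ > 1`, the function
`f(t) = e^{−κγt}[cosh(κt√(γ²−1)) + (γ/√(γ²−1)) sinh(κt√(γ²−1))]` satisfies `f(0) = 1` and
`f′(t) = −∫₀ᵗ κ² e^{−2κγ(t−s)} f(s) ds` for all `t ≥ 0`. -/
theorem lidarShabani_solution_overdamped
    (κ γ : ℝ) (hκ : 0 < κ) (hγ : 1 < γ)
    (f : ℝ → ℝ)
    (hf : ∀ t, f t = Real.exp (-(κ * γ * t)) *
      (Real.cosh (κ * t * Real.sqrt (γ ^ 2 - 1)) +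
        (γ / Real.sqrt (γ ^ 2 - 1)) * Real.sinh (κ * t * Real.sqrt (γ ^ 2 - 1)))) :
    f 0 = 1 ∧ ∀ t, 0 ≤ t →
      HasDerivAt f (-∫ s in (0 : ℝ)..t, κ ^ 2 * Real.exp (-(2 * κ * γ * (t - s))) * f s) t := by
  have hγ2 : 0 < γ ^ 2 - 1 := by nlinarith
  set σ := √(γ ^ 2 - 1)
  have hσ : σ ≠ 0 := (Real.sqrt_pos.2 hγ2).ne'
  have hω : κ * σ ≠ 0 := mul_ne_zero hκ.ne' hσ
  have hf_eq : f = dampedCosh (κ * γ) (κ * σ) := by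
    funext t
    rw [hf, dampedCosh, mul_div_mul_left _ _ hκ.ne']
    ring_nf
  have hκ2 : κ ^ 2 = (κ * γ) ^ 2 - (κ * σ) ^ 2 := by
    rw [mul_pow, mul_pow, Real.sq_sqrt hγ2.le]
    ring
  subst hf_eq
  refine ⟨dampedCosh_zero _ _, fun t _ => ?_⟩
  rw [hκ2, show 2 * κ * γ = 2 * (κ * γ) by ring]
  exact hasDerivAt_dampedCosh_neg_integral hω t
end

section
/- Let κ > 0 and γ ≥ 1, and let f : [0,∞) → ℝ be the solution of f′(t) = − ∫₀ᵗ κ² e^{−2κγ(t−s)} f(s) ds with f(0) = 1 (explicitly, f(t) = e^{−κt}(1+κt) if γ = 1 and f(t) = e^{−κγt}[ cosh(κt√(γ²−1)) + (γ/√(γ²−1)) sinh(κt√(γ²−1)) ] if γ > 1). Then f(t) ≥ 0 for all t ≥ 0. -/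
/-!
Since the kernel is exponential, differentiating the equation once more turns it into the damped
oscillator `f'' + 2κγ f' + κ² f = 0` with `f(0) = 1`, `f'(0) = 0`. For `γ ≥ 1` the
characteristic roots `r₁ ≤ r₂ ≤ 0` are real, so the operator factors as `(D - r₁)(D - r₂)`.
Then `g = f' - r₂ f` solves `g' = r₁ g` with `g(0) = -r₂ ≥ 0`, hence `g ≥ 0`, and `f' ≥ r₂ f`
gives `f(t) ≥ e^{r₂ t} > 0`.
-/

open Set Real

theorem exists_vieta_roots_of_four_mul_le_sq {p q : ℝ} (hp : 0 ≤ p) (hq : 0 ≤ q)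
    (hdisc : 4 * q ≤ p ^ 2) :
    ∃ r₁ r₂ : ℝ, r₂ ≤ 0 ∧ r₁ + r₂ = -p ∧ r₁ * r₂ = q := by
  set δ := √(p ^ 2 - 4 * q)
  have hδ_sq : δ ^ 2 = p ^ 2 - 4 * q := sq_sqrt (by linarith)
  have hδ_le : δ ≤ p := sqrt_le_iff.mpr ⟨hp, by linarith⟩
  exact ⟨(-p - δ) / 2, (-p + δ) / 2, by linarith, by ring, by linear_combination (-1 / 4) * hδ_sq⟩

theorem hasDerivWithinAt_integral_Ici {h : ℝ → ℝ} {a t : ℝ} (hh : ContinuousOn h (Ici a))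
    (ht : t ∈ Ici a) :
    HasDerivWithinAt (fun x => ∫ s in a..x, h s) (h t) (Ici a) t := by
  -- extending `h` by `h a` to the left of `a` makes it continuous on all of `ℝ`
  have hH : Continuous fun s => h (max s a) :=
    hh.comp_continuous (continuous_id.max continuous_const) fun s => le_max_right s a
  have hagree : EqOn (fun x => ∫ s in a..x, h s) (fun x => ∫ s in a..x, h (max s a)) (Ici a) :=
    fun x hx => intervalIntegral.integral_congr fun s hs => by
      rw [uIcc_of_le hx] at hs
      simp only [max_eq_left hs.1]
  have := (hH.integral_hasStrictDerivAt a t).hasDerivAt.hasDerivWithinAt (s := Ici a)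
  rw [max_eq_left ht] at this
  exact this.congr hagree (hagree ht)

theorem exp_mul_le_of_hasDerivWithinAt_of_mul_le {u u' : ℝ → ℝ} {r a : ℝ}
    (hu : ∀ t ∈ Ici a, HasDerivWithinAt u (u' t) (Ici a) t) (hle : ∀ t ∈ Ici a, r * u t ≤ u' t) :
    ∀ t ∈ Ici a, exp (r * (t - a)) * u a ≤ u t := by
  set v := fun t => exp (-(r * (t - a))) * u t
  have hv : ∀ t ∈ Ici a,
      HasDerivWithinAt v (exp (-(r * (t - a))) * (u' t - r * u t)) (Ici a) t := by
    intro t ht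
    have hexp : HasDerivAt (fun t => exp (-(r * (t - a)))) (-r * exp (-(r * (t - a)))) t := by
      simpa [mul_comm] using (((hasDerivAt_id t).sub_const a).const_mul r).neg.exp
    exact (hexp.hasDerivWithinAt.mul (hu t ht)).congr_deriv (by ring)
  have hmono : MonotoneOn v (Ici a) := by
    refine monotoneOn_of_hasDerivWithinAt_nonneg (convex_Ici a)
      (f' := fun t => exp (-(r * (t - a))) * (u' t - r * u t))
      (fun t ht => (hv t ht).continuousWithinAt) (fun t ht => ?_) (fun t ht => ?_)
    · rw [interior_Ici] at ht ⊢
      exact (hv t (mem_Ici_of_Ioi ht)).mono Ioi_subset_Ici_self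
    · rw [interior_Ici] at ht
      exact mul_nonneg (exp_pos _).le (sub_nonneg.mpr (hle t (mem_Ici_of_Ioi ht)))
  intro t ht
  have hvt : v a ≤ v t := hmono self_mem_Ici ht ht
  have hexp : exp (r * (t - a)) * exp (-(r * (t - a))) = 1 := by rw [← exp_add]; simp
  simp only [v, sub_self, mul_zero, neg_zero, exp_zero, one_mul] at hvt
  calc exp (r * (t - a)) * u a ≤ exp (r * (t - a)) * (exp (-(r * (t - a))) * u t) := by gcongr
    _ = u t := by rw [← mul_assoc, hexp, one_mul]

theorem exp_mul_le_of_hasDerivWithinAt_of_vieta {f φ : ℝ → ℝ} {r₁ r₂ a : ℝ}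
    (hf : ∀ t ∈ Ici a, HasDerivWithinAt f (φ t) (Ici a) t)
    (hφ : ∀ t ∈ Ici a, HasDerivWithinAt φ ((r₁ + r₂) * φ t - r₁ * r₂ * f t) (Ici a) t)
    (hinit : r₂ * f a ≤ φ a) :
    ∀ t ∈ Ici a, exp (r₂ * (t - a)) * f a ≤ f t := by
  have hg : ∀ t ∈ Ici a,
      HasDerivWithinAt (fun t => φ t - r₂ * f t) (r₁ * (φ t - r₂ * f t)) (Ici a) t :=
    fun t ht => ((hφ t ht).sub ((hf t ht).const_mul r₂)).congr_deriv (by ring)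
  have hg_nonneg : ∀ t ∈ Ici a, 0 ≤ φ t - r₂ * f t := fun t ht =>
    (mul_nonneg (exp_pos _).le (sub_nonneg.mpr hinit)).trans
      (exp_mul_le_of_hasDerivWithinAt_of_mul_le hg (fun t _ => le_rfl) t ht)
  exact exp_mul_le_of_hasDerivWithinAt_of_mul_le hf (fun t ht => by linarith [hg_nonneg t ht])

theorem hasDerivWithinAt_integral_exp_kernel {f : ℝ → ℝ} {t : ℝ} (k c : ℝ)
    (hf : ContinuousOn f (Ici 0)) (ht : t ∈ Ici 0) :
    HasDerivWithinAt (fun t => ∫ s in (0 : ℝ)..t, k * exp (-(c * (t - s))) * f s)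
      (k * f t - c * ∫ s in (0 : ℝ)..t, k * exp (-(c * (t - s))) * f s) (Ici 0) t := by
  have hfactor : ∀ t, ∫ s in (0 : ℝ)..t, k * exp (-(c * (t - s))) * f s
      = k * exp (-(c * t)) * ∫ s in (0 : ℝ)..t, exp (c * s) * f s := fun t => by
    rw [← intervalIntegral.integral_const_mul]
    congr 1 with s
    rw [show -(c * (t - s)) = -(c * t) + c * s by ring, exp_add]
    ring
  simp only [hfactor]
  have hprim := hasDerivWithinAt_integral_Ici (h := fun s => exp (c * s) * f s)
    ((continuous_exp.comp (continuous_const_mul c)).continuousOn.mul hf) ht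
  have hexp : HasDerivAt (fun t => k * exp (-(c * t))) (k * (-c * exp (-(c * t)))) t := by
    simpa [mul_comm] using (((hasDerivAt_id t).const_mul c).neg.exp).const_mul k
  have hexp_inv : exp (-(c * t)) * exp (c * t) = 1 := by rw [← exp_add]; simp
  refine (hexp.hasDerivWithinAt.mul hprim).congr_deriv ?_
  linear_combination (k * f t) * hexp_inv

/-- For `κ > 0` and `γ ≥ 1`, the solution of
`f′(t) = −∫₀ᵗ κ² e^{−2κγ(t−s)} f(s) ds` with `f(0) = 1` is nonnegative for all `t ≥ 0`. -/
theorem lidarShabani_nonneg_of_one_le_gamma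
    (κ γ : ℝ) (hκ : 0 < κ) (hγ : 1 ≤ γ)
    (f : ℝ → ℝ) (hf0 : f 0 = 1)
    (hf : ∀ t, 0 ≤ t →
      HasDerivAt f (-∫ s in (0 : ℝ)..t, κ ^ 2 * Real.exp (-(2 * κ * γ * (t - s))) * f s) t) :
    ∀ t, 0 ≤ t → 0 ≤ f t := by
  have hdisc : 4 * κ ^ 2 ≤ (2 * κ * γ) ^ 2 := by
    nlinarith [mul_le_mul_of_nonneg_left (one_le_pow₀ (n := 2) hγ) (sq_nonneg κ)]
  obtain ⟨r₁, r₂, hr₂, hsum, hprod⟩ :=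
    exists_vieta_roots_of_four_mul_le_sq (by positivity) (by positivity) hdisc
  have hcont : ContinuousOn f (Ici 0) := fun t ht => (hf t ht).continuousAt.continuousWithinAt
  have hbound := exp_mul_le_of_hasDerivWithinAt_of_vieta (r₁ := r₁) (r₂ := r₂)
    (fun t ht => (hf t ht).hasDerivWithinAt)
    (fun t ht => (hasDerivWithinAt_integral_exp_kernel _ _ hcont ht).neg.congr_deriv
      (by rw [hsum, hprod]; ring))
    (by simpa [hf0] using hr₂)
  intro t ht
  have hexp_le := hbound t ht
  rw [hf0, mul_one] at hexp_le
  exact (exp_pos _).le.trans hexp_le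
end

section
/- Let κ > 0 and 0 ≤ γ < 1, and let f : [0,∞) → ℝ be the solution of f′(t) = − ∫₀ᵗ κ² e^{−2κγ(t−s)} f(s) ds with f(0) = 1, given explicitly by f(t) = e^{−κγt}[ cos(κt√(1−γ²)) + (γ/√(1−γ²)) sin(κt√(1−γ²)) ]. Then there exists t > 0 with f(t) < 0. -/
open Real

/-! At the half period `t = π / (κ √(1 - γ²))` the sine term vanishes and the cosine equals `-1`,
so `f t = -e^{-κγt} < 0`. -/

/-- For `κ > 0` and `0 ≤ γ < 1`, the solution
`f(t) = e^{−κγt}[cos(κt√(1−γ²)) + (γ/√(1−γ²)) sin(κt√(1−γ²))]` of the Lidar–Shabani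
normalization equation becomes negative at some `t > 0`. -/
theorem lidarShabani_negative_of_gamma_lt_one
    (κ γ : ℝ) (hκ : 0 < κ) (hγ0 : 0 ≤ γ) (hγ1 : γ < 1)
    (f : ℝ → ℝ)
    (hf : ∀ t, f t = Real.exp (-(κ * γ * t)) *
      (Real.cos (κ * t * Real.sqrt (1 - γ ^ 2)) +
        (γ / Real.sqrt (1 - γ ^ 2)) * Real.sin (κ * t * Real.sqrt (1 - γ ^ 2)))) :
    ∃ t, 0 < t ∧ f t < 0 := by
  have hω : 0 < √(1 - γ ^ 2) := sqrt_pos.2 (by nlinarith)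
  refine ⟨π / (κ * √(1 - γ ^ 2)), by positivity, ?_⟩
  have half_period : κ * (π / (κ * √(1 - γ ^ 2))) * √(1 - γ ^ 2) = π := by field_simp
  rw [hf, half_period, cos_pi, sin_pi, mul_zero, add_zero, mul_neg_one, neg_lt_zero]
  exact exp_pos _
end
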